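/- For unit vectors φ_1,...,φ_n (n ≥ 2) in a real inner product space, max_{j≠j'} ⟨φ_j, φ_{j'}⟩ = -1/(n-1) holds if and only if ⟨φ_j, φ_{j'}⟩ = -1/(n-1) for all j ≠ j' (i.e., the vectors form a regular simplex). -/

import Mathlib

/-!
Expanding `‖∑ i, φ i‖² ≥ 0` shows that the `n (n - 1)` off-diagonal inner products of `n` unit
vectors sum to at least `-n`. If each of them is at most `-1/(n-1)`, their sum is also at most
`-n`, so every one of these bounds is attained.
-/

open Finset RealInnerProductSpace

section

variable {ι H : Type*} [Fintype ι] [NormedAddCommGroup H] [InnerProductSpace ℝ H]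

theorem norm_sum_sq_eq_sum_norm_sq_add_sum_offDiag_inner (φ : ι → H) :
    ‖∑ i, φ i‖ ^ 2 = ∑ i, ‖φ i‖ ^ 2 + ∑ p ∈ univ.offDiag, ⟪φ p.1, φ p.2⟫ := by
  classical
  calc ‖∑ i, φ i‖ ^ 2 = ∑ p ∈ univ ×ˢ univ, ⟪φ p.1, φ p.2⟫ := by
        rw [← real_inner_self_eq_norm_sq, sum_inner, sum_product]
        simp_rw [inner_sum]
    _ = ∑ p ∈ univ.diag, ⟪φ p.1, φ p.2⟫ + ∑ p ∈ univ.offDiag, ⟪φ p.1, φ p.2⟫ := by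
        rw [← diag_union_offDiag, sum_union (disjoint_diag_offDiag _)]
    _ = ∑ i, ‖φ i‖ ^ 2 + ∑ p ∈ univ.offDiag, ⟪φ p.1, φ p.2⟫ := by
        simp [diag]

theorem neg_card_le_sum_offDiag_inner {φ : ι → H} (hφ : ∀ i, ‖φ i‖ = 1) :
    -(Fintype.card ι : ℝ) ≤ ∑ p ∈ univ.offDiag, ⟪φ p.1, φ p.2⟫ := by
  have := norm_sum_sq_eq_sum_norm_sq_add_sum_offDiag_inner φ
  simp only [hφ, one_pow, sum_const, card_univ, nsmul_eq_mul, mul_one] at this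
  nlinarith [sq_nonneg ‖∑ i, φ i‖]

theorem inner_eq_neg_inv_of_forall_inner_le {φ : ι → H} (hφ : ∀ i, ‖φ i‖ = 1)
    (hle : ∀ i j, i ≠ j → ⟪φ i, φ j⟫ ≤ -(1 / ((Fintype.card ι : ℝ) - 1)))
    {i j : ι} (hij : i ≠ j) : ⟪φ i, φ j⟫ = -(1 / ((Fintype.card ι : ℝ) - 1)) := by
  set n := Fintype.card ι
  have hn : (n : ℝ) - 1 ≠ 0 := by
    rw [sub_ne_zero, Nat.cast_ne_one]
    exact fun h => hij (Fintype.card_le_one_iff (α := ι) |>.mp h.le i j)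
  have hsum_const : ∑ _p ∈ (univ : Finset ι).offDiag, -(1 / ((n : ℝ) - 1)) = -n := by
    rw [sum_const, offDiag_card, card_univ, nsmul_eq_mul, Nat.cast_sub (Nat.le_mul_self n)]
    push_cast
    field_simp
  have hsum_eq : ∑ p ∈ univ.offDiag, ⟪φ p.1, φ p.2⟫
      = ∑ _p ∈ (univ : Finset ι).offDiag, -(1 / ((n : ℝ) - 1)) :=
    le_antisymm (sum_le_sum fun p hp => hle _ _ (mem_offDiag.mp hp).2.2)
      (hsum_const ▸ neg_card_le_sum_offDiag_inner hφ)
  exact (sum_eq_sum_iff_of_le fun p hp => hle _ _ (mem_offDiag.mp hp).2.2).mp hsum_eq (i, j)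
    (by simp [hij])

end

theorem rankin_simplex_equality_general {H : Type*} [NormedAddCommGroup H] [InnerProductSpace ℝ H]
    {n : ℕ} (φ : Fin n → H) (hunit : ∀ j, ‖φ j‖ = 1)
    (hne : (Finset.univ.filter (fun p : Fin n × Fin n => p.1 ≠ p.2)).Nonempty) :
    (Finset.univ.filter (fun p : Fin n × Fin n => p.1 ≠ p.2)).sup' hne
        (fun p => (inner ℝ (φ p.1) (φ p.2) : ℝ)) = -(1 / ((n : ℝ) - 1))
      ↔ ∀ j j', j ≠ j' → (inner ℝ (φ j) (φ j') : ℝ) = -(1 / ((n : ℝ) - 1)) := by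
  constructor
  · intro hsup j j' hjj'
    have hle : ∀ i i', i ≠ i' → ⟪φ i, φ i'⟫ ≤ -(1 / ((Fintype.card (Fin n) : ℝ) - 1)) :=
      fun i i' hii' => by
        simpa [hsup] using le_sup' (fun p : Fin n × Fin n => ⟪φ p.1, φ p.2⟫)
          (s := univ.filter fun p : Fin n × Fin n => p.1 ≠ p.2) (b := (i, i'))
          (by simpa using hii')
    simpa using inner_eq_neg_inv_of_forall_inner_le hunit hle hjj'
  · intro h
    rw [sup'_congr hne rfl fun p hp => h p.1 p.2 (mem_filter.mp hp).2, sup'_const]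

/-- Equality in Rankin's simplex bound holds iff the vectors form a regular
simplex: `max_{j≠j'} ⟨φ_j, φ_{j'}⟩ = -1/(n-1)` iff all pairwise inner products
equal `-1/(n-1)`. -/
theorem rankin_simplex_equality {H : Type*} [NormedAddCommGroup H] [InnerProductSpace ℝ H]
    {n : ℕ} (hn : 2 ≤ n) (φ : Fin n → H) (hunit : ∀ j, ‖φ j‖ = 1)
    (hne : (Finset.univ.filter (fun p : Fin n × Fin n => p.1 ≠ p.2)).Nonempty) :
    (Finset.univ.filter (fun p : Fin n × Fin n => p.1 ≠ p.2)).sup' hne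
        (fun p => (inner ℝ (φ p.1) (φ p.2) : ℝ)) = -(1 / ((n : ℝ) - 1))
      ↔ ∀ j j', j ≠ j' → (inner ℝ (φ j) (φ j') : ℝ) = -(1 / ((n : ℝ) - 1)) :=
  rankin_simplex_equality_general φ hunit hne
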